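/- Let 𝔤 be a 4-dimensional Lie algebra whose derived subalgebra has dimension 1, with structure de₂* = de₃* = de₄* = 0 and de₁* = e₂* ∧ e₃* (i.e. [e₂,e₃] = -e₁, all other brackets zero). Then ω = e₁* ∧ e₂* + e₃* ∧ e₄* is a symplectic form on 𝔤, and every symplectic form on 𝔤 is not exact (since the image of d on 1-cochains is spanned by the decomposable form e₂* ∧ e₃*, whose square is zero). -/

import Mathlib

open scoped TensorProduct

variable {V : Type*} [AddCommGroup V] [Module ℝ V]

noncomputable def wedgeF {k l : ℕ} (f : V [⋀^Fin k]→ₗ[ℝ] ℝ) (g : V [⋀^Fin l]→ₗ[ℝ] ℝ) :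
    V [⋀^Fin (k + l)]→ₗ[ℝ] ℝ :=
  ((TensorProduct.lid ℝ ℝ).toLinearMap.compAlternatingMap (f.domCoprod g)).domDomCongr
    finSumFinEquiv

noncomputable def wpowF (ω : V [⋀^Fin 2]→ₗ[ℝ] ℝ) : (n : ℕ) → V [⋀^Fin (2 * n)]→ₗ[ℝ] ℝ
  | 0 => AlternatingMap.constOfIsEmpty ℝ V (Fin 0) 1
  | n + 1 => wedgeF (wpowF ω n) ω

noncomputable def oneAlt (α : Module.Dual ℝ V) : V [⋀^Fin 1]→ₗ[ℝ] ℝ :=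
  AlternatingMap.ofSubsingleton ℝ V ℝ 0 α

noncomputable def bilinToAlt (B : V →ₗ[ℝ] V →ₗ[ℝ] ℝ) (hB : ∀ x, B x x = 0) :
    V [⋀^Fin 2]→ₗ[ℝ] ℝ where
  toFun v := B (v 0) (v 1)
  map_update_add' := by
    intro _ v i x y
    fin_cases i <;> simp
  map_update_smul' := by
    intro _ v i c x
    fin_cases i <;> simp
  map_eq_zero_of_eq' := by
    intro v i j hij hne
    have h01 : v 0 = v 1 := by
      fin_cases i <;> fin_cases j <;> simp_all
    show B (v 0) (v 1) = 0
    rw [h01]; exact hB _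

variable {L : Type*} [LieRing L] [LieAlgebra ℝ L]

noncomputable def ceD (α : Module.Dual ℝ L) : L [⋀^Fin 2]→ₗ[ℝ] ℝ :=
  bilinToAlt
    (LinearMap.mk₂ ℝ (fun x y => -α ⁅x, y⁆)
      (fun x x' y => by simp [add_lie]; exact add_comm _ _)
      (fun c x y => by simp [smul_lie])
      (fun x y y' => by simp [lie_add]; exact add_comm _ _)
      (fun c x y => by simp [lie_smul]))
    (fun x => by simp)

/-- closedness of a 2-cochain under the Chevalley–Eilenberg differential -/
def IsCEClosed (ω : L [⋀^Fin 2]→ₗ[ℝ] ℝ) : Prop :=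
  ∀ x y z : L, ω ![⁅x, y⁆, z] - ω ![⁅x, z⁆, y] + ω ![⁅y, z⁆, x] = 0
/-!
With `e₁, …, e₄ = b 0, …, b 3`, the bracket is `⁅x, y⁆ = (e₃* ∧ e₂*)(x, y) • e₁`. Hence every
exact 2-form `dγ = -γ ⁅·, ·⁆` is a multiple of the decomposable form `e₂* ∧ e₃*`, and the square
of a decomposable form vanishes, so no exact form is symplectic. The form
`ω = e₁* ∧ e₂* + e₃* ∧ e₄*` is closed because the bracket takes values in `ℝ e₁` and
`ω(e₁, ·) = e₂*`, which turns `dω = 0` into a polynomial identity; and `ω ∧ ω (e₁, …, e₄) = 2`.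
-/

open Equiv

theorem wedgeF_apply_eq_sum_perm {k l : ℕ} (f : V [⋀^Fin k]→ₗ[ℝ] ℝ) (g : V [⋀^Fin l]→ₗ[ℝ] ℝ)
    (v : Fin (k + l) → V) :
    ((k.factorial * l.factorial : ℕ) : ℝ) * wedgeF f g v =
      ∑ σ : Perm (Fin (k + l)), (Perm.sign σ : ℝ) *
        (f (fun i => v (σ (Fin.castAdd l i))) * g (fun i => v (σ (Fin.natAdd k i)))) := by
  have h := congr(TensorProduct.lid ℝ ℝ ($(MultilinearMap.domCoprod_alternization_eq f g)
    (v ∘ finSumFinEquiv)))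
  simp only [Fintype.card_fin, AlternatingMap.smul_apply, map_nsmul,
    MultilinearMap.alternatization_apply, map_sum] at h
  rw [wedgeF, AlternatingMap.domDomCongr_apply, LinearMap.compAlternatingMap_apply,
    LinearEquiv.coe_toLinearMap, ← nsmul_eq_mul, ← h]
  refine Fintype.sum_equiv (finSumFinEquiv.permCongr) _ _ fun σ => ?_
  simp [TensorProduct.smul_tmul', Units.smul_def, Perm.sign_permCongr, Function.comp_def, mul_assoc]

theorem sum_perm_fin_succ {M : Type*} [AddCommMonoid M] {n : ℕ} (F : Perm (Fin (n + 1)) → M) :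
    ∑ σ, F σ = ∑ i, ∑ τ : Perm (Fin n), F (Perm.decomposeFin.symm (i, τ)) := by
  rw [Finset.univ_perm_fin_succ, Finset.sum_map, Fintype.sum_prod_type]
  rfl

theorem wedgeF_oneAlt_apply (α β : Module.Dual ℝ V) (x y : V) :
    wedgeF (oneAlt α) (oneAlt β) ![x, y] = α x * β y - α y * β x := by
  have h := wedgeF_apply_eq_sum_perm (oneAlt α) (oneAlt β) ![x, y]
  simpa [sum_perm_fin_succ, Fin.sum_univ_succ, oneAlt, sub_eq_add_neg] using h

theorem sum_sign_perm_fin_four (T : Fin 4 → Fin 4 → Fin 4 → Fin 4 → ℝ) :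
    ∑ σ : Perm (Fin 4), (Perm.sign σ : ℝ) * T (σ 0) (σ 1) (σ 2) (σ 3) =
      T 0 1 2 3 - T 0 1 3 2 - T 0 2 1 3 + T 0 2 3 1 + T 0 3 1 2 - T 0 3 2 1
      - T 1 0 2 3 + T 1 0 3 2 + T 1 2 0 3 - T 1 2 3 0 - T 1 3 0 2 + T 1 3 2 0
      + T 2 0 1 3 - T 2 0 3 1 - T 2 1 0 3 + T 2 1 3 0 + T 2 3 0 1 - T 2 3 1 0
      - T 3 0 1 2 + T 3 0 2 1 + T 3 1 0 2 - T 3 1 2 0 - T 3 2 0 1 + T 3 2 1 0 := by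
  simp only [sum_perm_fin_succ, Fin.sum_univ_four, Fin.sum_univ_three, Fin.sum_univ_two,
    Fintype.sum_unique]
  simp only [show (1 : Fin 4) = (0 : Fin 3).succ from rfl,
    show (2 : Fin 4) = (1 : Fin 3).succ from rfl, show (3 : Fin 4) = (2 : Fin 3).succ from rfl,
    show (1 : Fin 3) = (0 : Fin 2).succ from rfl, show (2 : Fin 3) = (1 : Fin 2).succ from rfl,
    show (1 : Fin 2) = (0 : Fin 1).succ from rfl,
    Perm.decomposeFin_symm_apply_zero, Perm.decomposeFin_symm_apply_succ,
    Perm.decomposeFin.symm_sign, swap_apply_def]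
  norm_num [Fin.ext_iff]
  ring

theorem wedgeF_two_two_apply (f g : V [⋀^Fin 2]→ₗ[ℝ] ℝ) (v : Fin 4 → V) :
    wedgeF f g v =
      f ![v 0, v 1] * g ![v 2, v 3] - f ![v 0, v 2] * g ![v 1, v 3] +
        f ![v 0, v 3] * g ![v 1, v 2] + f ![v 1, v 2] * g ![v 0, v 3] -
          f ![v 1, v 3] * g ![v 0, v 2] + f ![v 2, v 3] * g ![v 0, v 1] := by
  have h := wedgeF_apply_eq_sum_perm f g v
  have hv : ∀ σ : Perm (Fin 4), (fun i : Fin 2 => v (σ (Fin.castAdd 2 i))) = ![v (σ 0), v (σ 1)] ∧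
      (fun i : Fin 2 => v (σ (Fin.natAdd 2 i))) = ![v (σ 2), v (σ 3)] :=
    fun σ => ⟨funext fun i => by fin_cases i <;> rfl, funext fun i => by fin_cases i <;> rfl⟩
  simp only [hv] at h
  rw [sum_sign_perm_fin_four (fun p q r s => f ![v p, v q] * g ![v r, v s])] at h
  have hf (x y : V) : f ![y, x] = -f ![x, y] := by
    simpa using f.map_swap ![x, y] Fin.zero_ne_one
  have hg (x y : V) : g ![y, x] = -g ![x, y] := by
    simpa using g.map_swap ![x, y] Fin.zero_ne_one
  simp only [hf (v 0) (v 1), hf (v 0) (v 2), hf (v 0) (v 3), hf (v 1) (v 2), hf (v 1) (v 3),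
    hf (v 2) (v 3), hg (v 0) (v 1), hg (v 0) (v 2), hg (v 0) (v 3), hg (v 1) (v 2),
    hg (v 1) (v 3), hg (v 2) (v 3)] at h
  norm_num [Nat.factorial] at h
  linarith

theorem wedgeF_self_wedgeF_oneAlt_eq_zero (α β : Module.Dual ℝ V) :
    wedgeF (wedgeF (oneAlt α) (oneAlt β)) (wedgeF (oneAlt α) (oneAlt β)) = 0 := by
  ext v
  simp only [wedgeF_two_two_apply, wedgeF_oneAlt_apply, AlternatingMap.zero_apply]
  ring

section RankOneBracket

variable {α β : Module.Dual ℝ L} {z : L}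

theorem ceD_eq_wedgeF_oneAlt (hbr : ∀ x y : L, ⁅x, y⁆ = (α x * β y - α y * β x) • z)
    (γ : Module.Dual ℝ L) : ceD γ = wedgeF (oneAlt (-γ z • α)) (oneAlt β) := by
  ext v
  have hv : v = ![v 0, v 1] := funext fun i => by fin_cases i <;> rfl
  rw [hv, wedgeF_oneAlt_apply]
  change -γ ⁅v 0, v 1⁆ = _
  simp only [hbr, map_smul, smul_eq_mul, LinearMap.smul_apply]
  ring

theorem wedgeF_ceD_self_eq_zero (hbr : ∀ x y : L, ⁅x, y⁆ = (α x * β y - α y * β x) • z)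
    (γ : Module.Dual ℝ L) : wedgeF (ceD γ) (ceD γ) = 0 := by
  rw [ceD_eq_wedgeF_oneAlt hbr]
  exact wedgeF_self_wedgeF_oneAlt_eq_zero _ _

theorem isCEClosed_of_lie_eq (hbr : ∀ x y : L, ⁅x, y⁆ = (α x * β y - α y * β x) • z)
    {ω : L [⋀^Fin 2]→ₗ[ℝ] ℝ} (hω : ∀ w, ω ![z, w] = β w) : IsCEClosed ω := by
  have hω' (c : ℝ) (w : L) : ω ![c • z, w] = c * β w := by
    rw [← hω, ← smul_eq_mul]
    convert ω.map_update_smul ![z, w] 0 c z using 3 <;> ext i <;> fin_cases i <;> rfl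
  intro x y w
  rw [hbr, hbr, hbr, hω', hω', hω']
  ring

end RankOneBracket

noncomputable def darbouxForm (b : Module.Basis (Fin 4) ℝ V) : V [⋀^Fin 2]→ₗ[ℝ] ℝ :=
  wedgeF (oneAlt (b.coord 0)) (oneAlt (b.coord 1)) +
    wedgeF (oneAlt (b.coord 2)) (oneAlt (b.coord 3))

theorem darbouxForm_apply (b : Module.Basis (Fin 4) ℝ V) (u w : V) :
    darbouxForm b ![u, w] = b.coord 0 u * b.coord 1 w - b.coord 0 w * b.coord 1 u +
      (b.coord 2 u * b.coord 3 w - b.coord 2 w * b.coord 3 u) := by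
  simp only [darbouxForm, AlternatingMap.add_apply, wedgeF_oneAlt_apply]

theorem darbouxForm_basis_zero_apply (b : Module.Basis (Fin 4) ℝ V) (w : V) :
    darbouxForm b ![b 0, w] = b.coord 1 w := by
  simp [darbouxForm_apply]

theorem wedgeF_darbouxForm_self_ne_zero (b : Module.Basis (Fin 4) ℝ V) :
    wedgeF (darbouxForm b) (darbouxForm b) ≠ 0 := by
  have h : wedgeF (darbouxForm b) (darbouxForm b) b = 2 := by
    simp [wedgeF_two_two_apply, darbouxForm_apply]
    norm_num
  intro h0
  simp [h0] at h

theorem lie_eq_of_basis (b : Module.Basis (Fin 4) ℝ L) (h12 : ⁅b 1, b 2⁆ = -(b 0))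
    (h01 : ⁅b 0, b 1⁆ = 0) (h02 : ⁅b 0, b 2⁆ = 0) (h03 : ⁅b 0, b 3⁆ = 0)
    (h13 : ⁅b 1, b 3⁆ = 0) (h23 : ⁅b 2, b 3⁆ = 0) (x y : L) :
    ⁅x, y⁆ = (b.coord 2 x * b.coord 1 y - b.coord 2 y * b.coord 1 x) • b 0 := by
  have hbil (i j : Fin 4) : ⁅b i, b j⁆ =
      (b.coord 2 (b i) * b.coord 1 (b j) - b.coord 2 (b j) * b.coord 1 (b i)) • b 0 := by
    fin_cases i <;> fin_cases j <;> simp [h12, h01, h02, h03, h13, h23, ← lie_skew]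
  rw [← b.sum_repr x, ← b.sum_repr y]
  simp only [Fin.sum_univ_four, add_lie, lie_add, smul_lie, lie_smul, hbil]
  simp
  module

/-- for the 4-dimensional Lie algebra with de₁* = e₂*∧e₃*,
ω = e₁*∧e₂* + e₃*∧e₄* is symplectic and no symplectic form on it is exact. -/
theorem stmt17 (b : Module.Basis (Fin 4) ℝ L)
    (h12 : ⁅b 1, b 2⁆ = -(b 0))
    (h01 : ⁅b 0, b 1⁆ = 0) (h02 : ⁅b 0, b 2⁆ = 0) (h03 : ⁅b 0, b 3⁆ = 0)
    (h13 : ⁅b 1, b 3⁆ = 0) (h23 : ⁅b 2, b 3⁆ = 0) :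
    IsCEClosed (wedgeF (oneAlt (b.coord 0)) (oneAlt (b.coord 1)) +
        wedgeF (oneAlt (b.coord 2)) (oneAlt (b.coord 3))) ∧
      wedgeF (wedgeF (oneAlt (b.coord 0)) (oneAlt (b.coord 1)) +
          wedgeF (oneAlt (b.coord 2)) (oneAlt (b.coord 3)))
        (wedgeF (oneAlt (b.coord 0)) (oneAlt (b.coord 1)) +
          wedgeF (oneAlt (b.coord 2)) (oneAlt (b.coord 3))) ≠ 0 ∧
      (∀ ω' : L [⋀^Fin 2]→ₗ[ℝ] ℝ, IsCEClosed ω' → wedgeF ω' ω' ≠ 0 →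
        ∀ β : Module.Dual ℝ L, ceD β ≠ ω') := by
  have hbr := lie_eq_of_basis b h12 h01 h02 h03 h13 h23
  refine ⟨isCEClosed_of_lie_eq hbr (darbouxForm_basis_zero_apply b),
    wedgeF_darbouxForm_self_ne_zero b, ?_⟩
  rintro ω' - hsq γ rfl
  exact hsq (wedgeF_ceD_self_eq_zero hbr γ)
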